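/- Let α be a composition and λ a partition with λ ⊆ α, such that the skew diagram α/λ is connected and every row of α/λ contains at least one cell. Then the row-strict extended Schur function ℛε_{α/λ} is symmetric if and only if α is a partition. -/

import Mathlib

/-!
Formalization framework.

* A composition is a `List ℕ` of positive parts (bottom row first); a partition is a
  composition with weakly decreasing parts.
* `cells α β` is the set of cells of the skew diagram `α/β`, a cell being a pair
  `(i, j)` of a row index `i` and a column index `j` (both `0`-indexed; row `i`
  corresponds to row `i+1` of the paper, counted from the bottom).
* Tableaux are fillings `T : ℕ × ℕ → ℕ` of the cells (entries in `ℕ`, i.e. the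
  positive integers `1,2,3,…` relabelled as `0,1,2,…`, which is harmless), with `T = 0`
  off the cells.
* All the Schur-like functions are formal power series in `MvPowerSeries ℕ ℚ`
  (variables `x_i`, `i : ℕ`): the coefficient of the monomial `d : ℕ →₀ ℕ` is the
  number of admissible tableaux of content `d`.
* Such a series is symmetric iff it is invariant under every permutation of the
  variables.
-/

open scoped Classical

namespace SQS

/-- A composition: a finite list of positive integers (the parts). -/
def IsComposition (α : List ℕ) : Prop := ∀ x ∈ α, 0 < x

/-- A partition: a composition whose parts weakly decrease. -/
def IsPartitionL (α : List ℕ) : Prop := IsComposition α ∧ α.Pairwise (· ≥ ·)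

/-- `β ⊆ α` for diagrams of compositions: `β` is no longer than `α` and each part of
`β` is at most the corresponding part of `α`. -/
def Subdiagram (β α : List ℕ) : Prop :=
  β.length ≤ α.length ∧ ∀ i < β.length, β.getD i 0 ≤ α.getD i 0

/-- The cells of the skew diagram `α/β`: cell `(i, j)` (row `i` from the bottom,
column `j`, both `0`-indexed) belongs to `α/β` iff `i < ℓ(α)` and `β_i ≤ j < α_i`. -/
noncomputable def cells (α β : List ℕ) : Finset (ℕ × ℕ) :=
  (Finset.range α.length ×ˢ Finset.range (α.foldr max 0)).filter
    fun c => β.getD c.1 0 ≤ c.2 ∧ c.2 < α.getD c.1 0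

/-- The set of columns spanned by the cells of row `i` of `α/β`. -/
def colsOfRow (α β : List ℕ) (i : ℕ) : Set ℕ := {j | (i, j) ∈ cells α β}

/-- `α/β` is connected: its rows cannot be partitioned into two nonempty sets such
that the sets of columns spanned by the cells in the two sets of rows are disjoint. -/
def ConnectedDiagram (α β : List ℕ) : Prop :=
  ¬ ∃ R₁ R₂ : Set ℕ, R₁.Nonempty ∧ R₂.Nonempty ∧ Disjoint R₁ R₂ ∧
      R₁ ∪ R₂ = Set.Iio α.length ∧
      Disjoint (⋃ i ∈ R₁, colsOfRow α β i) (⋃ i ∈ R₂, colsOfRow α β i)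

/-- Every row of `α/β` contains at least one cell, i.e. `β_i < α_i` for all
`1 ≤ i ≤ ℓ(β)` (rows beyond `ℓ(β)` automatically contain cells). -/
def RowsNonempty (α β : List ℕ) : Prop := ∀ i < β.length, β.getD i 0 < α.getD i 0

/-- A filling of the cell set `s`: arbitrary entries on `s` and `0` off `s`. -/
def IsFilling (s : Finset (ℕ × ℕ)) (T : ℕ × ℕ → ℕ) : Prop := ∀ c, c ∉ s → T c = 0

/-- Row condition: any two entries in the same row, read left to right, are related
by `r`. -/
def RowCond (s : Finset (ℕ × ℕ)) (r : ℕ → ℕ → Prop) (T : ℕ × ℕ → ℕ) : Prop :=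
  ∀ i j j', (i, j) ∈ s → (i, j') ∈ s → j < j' → r (T (i, j)) (T (i, j'))

/-- Column condition: any two entries in the same column, read bottom to top, are
related by `r`. -/
def ColCond (s : Finset (ℕ × ℕ)) (r : ℕ → ℕ → Prop) (T : ℕ × ℕ → ℕ) : Prop :=
  ∀ i i' j, (i, j) ∈ s → (i', j) ∈ s → i < i' → r (T (i, j)) (T (i', j))

/-- First-column condition: any two entries in leftmost-column cells (cells of `s` in
column `0`), read bottom to top, are related by `r`. -/
def FirstColCond (s : Finset (ℕ × ℕ)) (r : ℕ → ℕ → Prop) (T : ℕ × ℕ → ℕ) : Prop :=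
  ∀ i i', (i, 0) ∈ s → (i', 0) ∈ s → i < i' → r (T (i, 0)) (T (i', 0))

/-- The content of a filling: `content s T i` is the number of cells of `s` whose
entry equals `i`. -/
noncomputable def content (s : Finset (ℕ × ℕ)) (T : ℕ × ℕ → ℕ) : ℕ →₀ ℕ :=
  ∑ c ∈ s, Finsupp.single (T c) 1

/-- The generating function `Σ_T x^T` over all fillings of `s` satisfying `P`:
the coefficient of the monomial `d` is the number of such fillings of content `d`. -/
noncomputable def genFun (s : Finset (ℕ × ℕ)) (P : (ℕ × ℕ → ℕ) → Prop) :
    MvPowerSeries ℕ ℚ :=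
  fun d => (Nat.card {T : ℕ × ℕ → ℕ // IsFilling s T ∧ P T ∧ content s T = d} : ℚ)

/-- A formal power series is symmetric iff it is invariant under every permutation of
the variables (a permutation `σ` sends the monomial `d` to `Finsupp.mapDomain σ d`). -/
def IsSymmFn (f : MvPowerSeries ℕ ℚ) : Prop :=
  ∀ (σ : Equiv.Perm ℕ) (d : ℕ →₀ ℕ),
    MvPowerSeries.coeff (Finsupp.mapDomain σ d) f = MvPowerSeries.coeff d f

/-- The (skew) Schur function of an arbitrary cell set: columns strictly increase
bottom to top, rows weakly increase left to right. -/
noncomputable def schurOfCells (s : Finset (ℕ × ℕ)) : MvPowerSeries ℕ ℚ :=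
  genFun s fun T => ColCond s (· < ·) T ∧ RowCond s (· ≤ ·) T

/-- The skew Schur function `s_{lam/mu}`. -/
noncomputable def skewSchur (lam mu : List ℕ) : MvPowerSeries ℕ ℚ :=
  schurOfCells (cells lam mu)

/-- The Schur function `s_lam`. -/
noncomputable def schurF (lam : List ℕ) : MvPowerSeries ℕ ℚ := skewSchur lam []

/-- The dual immaculate function `𝔖*_{α/β}`: first column strict, rows weak. -/
noncomputable def dualImmaculateF (α β : List ℕ) : MvPowerSeries ℕ ℚ :=
  genFun (cells α β) fun T =>
    FirstColCond (cells α β) (· < ·) T ∧ RowCond (cells α β) (· ≤ ·) T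

/-- The row-strict dual immaculate function `ℛ𝔖*_{α/β}`: first column weak, rows
strict. -/
noncomputable def rowStrictDualImmaculateF (α β : List ℕ) : MvPowerSeries ℕ ℚ :=
  genFun (cells α β) fun T =>
    FirstColCond (cells α β) (· ≤ ·) T ∧ RowCond (cells α β) (· < ·) T

/-- The extended Schur function `ε_{α/λ}`: columns strict, rows weak. -/
noncomputable def extendedSchurF (α lam : List ℕ) : MvPowerSeries ℕ ℚ :=
  genFun (cells α lam) fun T =>
    ColCond (cells α lam) (· < ·) T ∧ RowCond (cells α lam) (· ≤ ·) T

/-- The row-strict extended Schur function `ℛε_{α/λ}`: columns weak, rows strict. -/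
noncomputable def rowStrictExtendedSchurF (α lam : List ℕ) : MvPowerSeries ℕ ℚ :=
  genFun (cells α lam) fun T =>
    ColCond (cells α lam) (· ≤ ·) T ∧ RowCond (cells α lam) (· < ·) T

/-- The strictly advanced function `𝒜̄𝔖*_{α/β}`: first column strict, rows strict. -/
noncomputable def strictAdvancedF (α β : List ℕ) : MvPowerSeries ℕ ℚ :=
  genFun (cells α β) fun T =>
    FirstColCond (cells α β) (· < ·) T ∧ RowCond (cells α β) (· < ·) T

/-- The weakly advanced function `𝒜𝔖*_{α/β}`: first column weak, rows weak. -/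
noncomputable def weakAdvancedF (α β : List ℕ) : MvPowerSeries ℕ ℚ :=
  genFun (cells α β) fun T =>
    FirstColCond (cells α β) (· ≤ ·) T ∧ RowCond (cells α β) (· ≤ ·) T

/-- The strictly advanced extended function `𝒜̄ε_{α/λ}`: columns strict, rows strict. -/
noncomputable def strictAdvancedExtendedF (α lam : List ℕ) : MvPowerSeries ℕ ℚ :=
  genFun (cells α lam) fun T =>
    ColCond (cells α lam) (· < ·) T ∧ RowCond (cells α lam) (· < ·) T

/-- The weakly advanced extended function `𝒜ε_{α/λ}`: columns weak, rows weak. -/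
noncomputable def weakAdvancedExtendedF (α lam : List ℕ) : MvPowerSeries ℕ ℚ :=
  genFun (cells α lam) fun T =>
    ColCond (cells α lam) (· ≤ ·) T ∧ RowCond (cells α lam) (· ≤ ·) T


/-! ### Auxiliary lemmas -/

lemma getD_le_foldr_max (l : List ℕ) (i : ℕ) : l.getD i 0 ≤ l.foldr max 0 := by
  induction l generalizing i with
  | nil => simp [List.getD]
  | cons a t ih =>
    cases i with
    | zero => simpa using Or.inl le_rfl
    | succ n =>
      simp only [List.getD_cons_succ, List.foldr_cons]
      exact le_trans (ih n) (le_max_right _ _)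

lemma getD_antitone {l : List ℕ} (h : l.Pairwise (· ≥ ·)) {r r' : ℕ} (hrr : r ≤ r') :
    l.getD r' 0 ≤ l.getD r 0 := by
  by_cases h' : r' < l.length
  · have hr : r < l.length := lt_of_le_of_lt hrr h'
    rcases eq_or_lt_of_le hrr with rfl | hlt
    · exact le_rfl
    · rw [l.getD_eq_getElem 0 h', l.getD_eq_getElem 0 hr]
      exact List.pairwise_iff_getElem.1 h r r' hr h' hlt
  · rw [l.getD_eq_default 0 (not_lt.1 h')]
    exact Nat.zero_le _

lemma mem_cells {α β : List ℕ} {c : ℕ × ℕ} :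
    c ∈ cells α β ↔ c.1 < α.length ∧ β.getD c.1 0 ≤ c.2 ∧ c.2 < α.getD c.1 0 := by
  unfold cells
  simp only [Finset.mem_filter, Finset.mem_product, Finset.mem_range]
  constructor
  · rintro ⟨⟨h1, _⟩, h3, h4⟩; exact ⟨h1, h3, h4⟩
  · rintro ⟨h1, h3, h4⟩
    exact ⟨⟨h1, lt_of_lt_of_le h4 (getD_le_foldr_max _ _)⟩, h3, h4⟩

lemma content_apply (s : Finset (ℕ × ℕ)) (T : ℕ × ℕ → ℕ) (v : ℕ) :
    content s T v = (s.filter fun c => T c = v).card := by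
  unfold content
  rw [Finsupp.finset_sum_apply, Finset.card_filter]
  refine Finset.sum_congr rfl fun c _ => ?_
  simp [Finsupp.single_apply, eq_comm]

/-- the total weight (degree-with-multiplicity) of a content -/
noncomputable def wt (d : ℕ →₀ ℕ) : ℕ := d.sum fun v m => v * m

lemma wt_content (s : Finset (ℕ × ℕ)) (T : ℕ × ℕ → ℕ) :
    wt (content s T) = ∑ c ∈ s, T c := by
  unfold wt content
  rw [← Finsupp.sum_finset_sum_index (by simp) (by intro a b₁ b₂; ring)]
  refine Finset.sum_congr rfl fun c _ => ?_
  rw [Finsupp.sum_single_index (by simp)]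
  exact Nat.mul_one _

lemma sum_content (s : Finset (ℕ × ℕ)) (T : ℕ × ℕ → ℕ) :
    ((content s T).sum fun _ m => m) = s.card := by
  unfold content
  rw [← Finsupp.sum_finset_sum_index (by simp) (by intro a b₁ b₂; rfl)]
  simp

lemma coeff_genFun (s : Finset (ℕ × ℕ)) (P : (ℕ × ℕ → ℕ) → Prop) (d : ℕ →₀ ℕ) :
    MvPowerSeries.coeff d (genFun s P) =
      (Nat.card {T : ℕ × ℕ → ℕ // IsFilling s T ∧ P T ∧ content s T = d} : ℚ) := rfl

lemma tableauSet_finite (s : Finset (ℕ × ℕ)) (P : (ℕ × ℕ → ℕ) → Prop) (d : ℕ →₀ ℕ) :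
    Finite {T : ℕ × ℕ → ℕ // IsFilling s T ∧ P T ∧ content s T = d} := by
  classical
  have key : ∀ (T : ℕ × ℕ → ℕ), IsFilling s T ∧ P T ∧ content s T = d → ∀ c : ℕ × ℕ,
      c ∈ s → T c ∈ (insert 0 d.support : Finset ℕ) := by
    rintro T ⟨hfil, _, hcont⟩ c hc
    refine Finset.mem_insert.2 (Or.inr ?_)
    rw [Finsupp.mem_support_iff, ← hcont, content_apply]
    have hmem : c ∈ s.filter fun c' => T c' = T c := Finset.mem_filter.2 ⟨hc, rfl⟩
    exact fun h => by simp [Finset.card_eq_zero.1 h] at hmem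
  refine Finite.of_injective
    (fun x : {T : ℕ × ℕ → ℕ // IsFilling s T ∧ P T ∧ content s T = d} =>
      (fun c : s => (⟨x.1 c, key x.1 x.2 c.1 c.2⟩ : (insert 0 d.support : Finset ℕ)))) ?_
  rintro ⟨T, hT⟩ ⟨T', hT'⟩ h
  refine Subtype.ext (funext fun c => ?_)
  by_cases hc : c ∈ s
  · exact congrArg Subtype.val (congrFun h ⟨c, hc⟩)
  · show T c = T' c
    rw [hT.1 c hc, hT'.1 c hc]

/-! ### The forward direction: symmetric implies partition -/

/-- The value-reversal permutation on `{0,…,M}`. -/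
def revAt (M : ℕ) : Equiv.Perm ℕ :=
  Function.Involutive.toPerm (fun v => if v ≤ M then M - v else v)
    (by intro v; dsimp only; split_ifs <;> omega)

lemma revAt_apply (M v : ℕ) : revAt M v = if v ≤ M then M - v else v := rfl

lemma revAt_symm (M : ℕ) : (revAt M).symm = revAt M := rfl

lemma pos_getD_of_comp {α : List ℕ} (hα : IsComposition α) {r : ℕ} (hr : r < α.length) :
    0 < α.getD r 0 := by
  rw [α.getD_eq_getElem 0 hr]
  exact hα _ (α.getElem_mem hr)

lemma mem_cells' {α β : List ℕ} {r j : ℕ} :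
    ((r, j) : ℕ × ℕ) ∈ cells α β ↔
      r < α.length ∧ β.getD r 0 ≤ j ∧ j < α.getD r 0 := mem_cells

/-- The minimal row-strict tableau of shape `α/lam`. -/
noncomputable def Tmin (α lam : List ℕ) : ℕ × ℕ → ℕ :=
  fun c => if c ∈ cells α lam then c.2 - lam.getD c.1 0 else 0

lemma Tmin_apply {α lam : List ℕ} {r j : ℕ} (hc : ((r, j) : ℕ × ℕ) ∈ cells α lam) :
    Tmin α lam (r, j) = j - lam.getD r 0 := by
  unfold Tmin; rw [if_pos hc]

/-- The per-cell weight used in the double count. -/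
def wfun (α : List ℕ) (k : ℕ) : ℕ × ℕ → ℕ :=
  fun c => α.getD (if c.1 = k then k + 1 else c.1) 0 - 1 - c.2

lemma wfun_k {α : List ℕ} {k j : ℕ} : wfun α k (k, j) = α.getD (k + 1) 0 - 1 - j := by
  simp [wfun]

lemma wfun_ne {α : List ℕ} {k r j : ℕ} (h : r ≠ k) :
    wfun α k (r, j) = α.getD r 0 - 1 - j := by
  simp [wfun, h]

lemma forward_adj (α lam : List ℕ) (hα : IsComposition α) (hlam : IsPartitionL lam)
    (hrows : RowsNonempty α lam) (k : ℕ) (hk1 : k + 1 < α.length)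
    (hasc : α.getD k 0 < α.getD (k + 1) 0)
    (hsymm : IsSymmFn (rowStrictExtendedSchurF α lam)) : False := by
  classical
  set s := cells α lam with hs
  set n := α.length with hn
  have hla : ∀ r < n, lam.getD r 0 < α.getD r 0 := by
    intro r hr
    by_cases h : r < lam.length
    · exact hrows r h
    · rw [lam.getD_eq_default 0 (not_lt.1 h)]
      exact pos_getD_of_comp hα hr
  set Tm : ℕ × ℕ → ℕ := Tmin α lam with hTm
  set d : ℕ →₀ ℕ := content s Tm with hd
  set M : ℕ := (Finset.range n).sup (fun r => α.getD r 0 - 1 - lam.getD r 0) with hM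
  have Tm_valid : IsFilling s Tm ∧
      (ColCond s (· ≤ ·) Tm ∧ RowCond s (· < ·) Tm) ∧ content s Tm = d := by
    refine ⟨fun c hc => by simp only [hTm, Tmin]; exact if_neg hc, ⟨?_, ?_⟩, rfl⟩
    · intro i i' j hij hij' hii'
      rw [hTm, Tmin_apply hij, Tmin_apply hij']
      exact Nat.sub_le_sub_left (getD_antitone hlam.2 (le_of_lt hii')) _
    · intro i j j' hij hij' hjj'
      rw [hTm, Tmin_apply hij, Tmin_apply hij']
      exact Nat.sub_lt_sub_right (mem_cells'.1 hij).2.1 hjj'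
  have Tm_le : ∀ c ∈ s, Tm c ≤ M := by
    rintro ⟨r, j⟩ hc
    obtain ⟨h1, h2, h3⟩ := mem_cells'.1 hc
    rw [hTm, Tmin_apply hc]
    have hle : j - lam.getD r 0 ≤ α.getD r 0 - 1 - lam.getD r 0 := by omega
    refine le_trans hle ?_
    rw [hM]
    exact Finset.le_sup (f := fun r => α.getD r 0 - 1 - lam.getD r 0)
      (Finset.mem_range.2 h1)
  have dsupp : ∀ v ∈ d.support, v ≤ M := by
    intro v hv
    rw [Finsupp.mem_support_iff, hd, content_apply] at hv
    obtain ⟨c, hc⟩ := Finset.card_pos.1 (Nat.pos_of_ne_zero hv)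
    obtain ⟨hcs, hcv⟩ := Finset.mem_filter.1 hc
    exact hcv ▸ Tm_le c hcs
  have hfin := tableauSet_finite s
    (fun T => ColCond s (· ≤ ·) T ∧ RowCond s (· < ·) T)
  have hcoeff_ne : MvPowerSeries.coeff d (rowStrictExtendedSchurF α lam) ≠ 0 := by
    rw [rowStrictExtendedSchurF, coeff_genFun]
    exact Nat.cast_ne_zero.2 (Nat.card_ne_zero.2 ⟨⟨⟨Tm, Tm_valid⟩⟩, hfin d⟩)
  have hcoeff' := hsymm (revAt M) d
  rw [rowStrictExtendedSchurF, coeff_genFun, coeff_genFun] at hcoeff'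
  have hne : Nat.card {T : ℕ × ℕ → ℕ // IsFilling s T ∧
      (ColCond s (· ≤ ·) T ∧ RowCond s (· < ·) T) ∧
      content s T = Finsupp.mapDomain (⇑(revAt M)) d} ≠ 0 := by
    intro h0
    rw [h0] at hcoeff'
    rw [rowStrictExtendedSchurF, coeff_genFun] at hcoeff_ne
    exact hcoeff_ne (by exact_mod_cast hcoeff'.symm)
  obtain ⟨⟨T, hfill, ⟨hcolT, hrowT⟩, hcont⟩⟩ := (Nat.card_ne_zero.1 hne).1
  -- row-increase estimate
  have rowstep : ∀ r j t, (r, j) ∈ s → (r, j + t) ∈ s → T (r, j) + t ≤ T (r, j + t) := by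
    intro r j t hj hjt
    induction t with
    | zero => simp
    | succ t ih =>
      obtain ⟨ha1, ha2, ha3⟩ := mem_cells'.1 hj
      obtain ⟨hb1, hb2, hb3⟩ := mem_cells'.1 hjt
      have hmid : (r, j + t) ∈ s := mem_cells'.2 ⟨ha1, by omega, by omega⟩
      have h1 := ih hmid
      have h2 := hrowT r (j + t) (j + t + 1) hmid (by exact_mod_cast hjt) (by omega)
      show T (r, j) + (t + 1) ≤ T (r, j + t + 1)
      omega
  -- entries of T are at most M
  have T_le : ∀ c ∈ s, T c ≤ M := by
    intro c hc
    have hv : content s T (T c) ≠ 0 := by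
      rw [content_apply]
      have hmem : c ∈ s.filter fun c' => T c' = T c := Finset.mem_filter.2 ⟨hc, rfl⟩
      exact fun h => by simp [Finset.card_eq_zero.1 h] at hmem
    rw [hcont] at hv
    have heq : Finsupp.mapDomain (⇑(revAt M)) d (T c) = d (revAt M (T c)) := by
      rw [show (⇑(revAt M)) = ⇑(revAt M : ℕ ≃ ℕ) from rfl,
        Finsupp.mapDomain_equiv_apply, revAt_symm]
    rw [heq] at hv
    have hle := dsupp _ (Finsupp.mem_support_iff.2 hv)
    by_contra hgt
    rw [revAt_apply, if_neg (by omega)] at hle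
    omega
  -- the per-cell upper bound
  have percell : ∀ c ∈ s, T c + wfun α k c ≤ M := by
    rintro ⟨r, j⟩ hc
    obtain ⟨h1, h2, h3⟩ := mem_cells'.1 hc
    by_cases hrk : r = k
    · subst hrk
      have hup : (r + 1, j) ∈ s := mem_cells'.2
        ⟨hk1, le_trans (getD_antitone hlam.2 (by omega)) h2, by omega⟩
      have hla1 := hla (r + 1) hk1
      have hend : (r + 1, α.getD (r + 1) 0 - 1) ∈ s := mem_cells'.2 ⟨hk1, by omega, by omega⟩
      have hcol := hcolT r (r + 1) j hc hup (by omega)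
      have hj : j + (α.getD (r + 1) 0 - 1 - j) = α.getD (r + 1) 0 - 1 := by omega
      have hstep := rowstep (r + 1) j (α.getD (r + 1) 0 - 1 - j) hup (by rw [hj]; exact hend)
      rw [hj] at hstep
      have hle := T_le _ hend
      rw [wfun_k]
      omega
    · have hla1 := hla r h1
      have hend : (r, α.getD r 0 - 1) ∈ s := mem_cells'.2 ⟨h1, by omega, by omega⟩
      have hj : j + (α.getD r 0 - 1 - j) = α.getD r 0 - 1 := by omega
      have hstep := rowstep r j (α.getD r 0 - 1 - j) hc (by rw [hj]; exact hend)
      rw [hj] at hstep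
      have hle := T_le _ hend
      rw [wfun_ne hrk]
      omega
  -- summing the per-cell bound
  have hsum1 : (∑ c ∈ s, T c) + (∑ c ∈ s, wfun α k c) ≤ s.card * M := by
    rw [← Finset.sum_add_distrib]
    calc (∑ c ∈ s, (T c + wfun α k c)) ≤ ∑ _c ∈ s, M := Finset.sum_le_sum percell
    _ = s.card * M := by rw [Finset.sum_const, smul_eq_mul]
  -- total weight identity
  have hwt1 : (∑ c ∈ s, T c) + (∑ c ∈ s, Tm c) = s.card * M := by
    have h1 : (∑ c ∈ s, T c) = wt (Finsupp.mapDomain (⇑(revAt M)) d) := by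
      rw [← wt_content s T, hcont]
    have h2 : (∑ c ∈ s, Tm c) = wt d := (wt_content s Tm).symm
    rw [h1, h2]
    unfold wt
    rw [Finsupp.sum_mapDomain_index (by simp) (by intro a b₁ b₂; ring), ← Finsupp.sum_add]
    have hptw : (d.sum fun v m => revAt M v * m + v * m) = d.sum fun _ m => M * m := by
      apply Finsupp.sum_congr
      intro v hv
      have hvM := dsupp v hv
      rw [revAt_apply, if_pos hvM]
      have hMv : M - v + v = M := by omega
      rw [← add_mul, hMv]
    rw [hptw]
    have hconst : (d.sum fun _ m => M * m) = M * d.sum fun _ m => m := by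
      unfold Finsupp.sum
      rw [Finset.mul_sum]
    rw [hconst, hd, sum_content, mul_comm]
  -- the strict inequality ∑ Tm < ∑ w via row-reflection
  have hφsum : (∑ c ∈ s, Tm c) = ∑ c ∈ s, (α.getD c.1 0 - 1 - c.2) := by
    refine Finset.sum_nbij'
      (fun c => (c.1, lam.getD c.1 0 + (α.getD c.1 0 - 1 - c.2)))
      (fun c => (c.1, lam.getD c.1 0 + (α.getD c.1 0 - 1 - c.2)))
      ?_ ?_ ?_ ?_ ?_
    · rintro ⟨r, j⟩ hc
      obtain ⟨h1, h2, h3⟩ := mem_cells'.1 hc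
      show ((r, lam.getD r 0 + (α.getD r 0 - 1 - j)) : ℕ × ℕ) ∈ s
      exact mem_cells'.2 ⟨h1, by omega, by omega⟩
    · rintro ⟨r, j⟩ hc
      obtain ⟨h1, h2, h3⟩ := mem_cells'.1 hc
      show ((r, lam.getD r 0 + (α.getD r 0 - 1 - j)) : ℕ × ℕ) ∈ s
      exact mem_cells'.2 ⟨h1, by omega, by omega⟩
    · rintro ⟨r, j⟩ hc
      obtain ⟨h1, h2, h3⟩ := mem_cells'.1 hc
      show ((r, lam.getD r 0 + (α.getD r 0 - 1 -
          (lam.getD r 0 + (α.getD r 0 - 1 - j)))) : ℕ × ℕ) = (r, j)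
      simp only [Prod.mk.injEq]
      exact ⟨trivial, by omega⟩
    · rintro ⟨r, j⟩ hc
      obtain ⟨h1, h2, h3⟩ := mem_cells'.1 hc
      show ((r, lam.getD r 0 + (α.getD r 0 - 1 -
          (lam.getD r 0 + (α.getD r 0 - 1 - j)))) : ℕ × ℕ) = (r, j)
      simp only [Prod.mk.injEq]
      exact ⟨trivial, by omega⟩
    · rintro ⟨r, j⟩ hc
      obtain ⟨h1, h2, h3⟩ := mem_cells'.1 hc
      have hmem : ((r, lam.getD r 0 + (α.getD r 0 - 1 - j)) : ℕ × ℕ) ∈ s :=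
        mem_cells'.2 ⟨h1, by omega, by omega⟩
      rw [hTm, Tmin_apply hc]
      show j - lam.getD r 0 = α.getD r 0 - 1 - (lam.getD r 0 + (α.getD r 0 - 1 - j))
      omega
  have hstrict : (∑ c ∈ s, (α.getD c.1 0 - 1 - c.2)) < ∑ c ∈ s, wfun α k c := by
    have c0mem : ((k, lam.getD k 0) : ℕ × ℕ) ∈ s :=
      mem_cells'.2 ⟨by omega, le_rfl, hla k (by omega)⟩
    refine Finset.sum_lt_sum (fun c hc => ?_) ⟨(k, lam.getD k 0), c0mem, ?_⟩
    · obtain ⟨r, j⟩ := c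
      dsimp only
      by_cases hrk : r = k
      · subst hrk
        rw [wfun_k]
        omega
      · rw [wfun_ne hrk]
    · dsimp only
      rw [wfun_k]
      have h1 := hla k (by omega : k < n)
      omega
  omega


lemma forward_dir (α lam : List ℕ) (hα : IsComposition α) (hlam : IsPartitionL lam)
    (hrows : RowsNonempty α lam)
    (hsymm : IsSymmFn (rowStrictExtendedSchurF α lam)) : IsPartitionL α := by
  refine ⟨hα, ?_⟩
  have : IsTrans ℕ (· ≥ ·) := ⟨fun a b c h1 h2 => le_trans h2 h1⟩
  rw [← List.isChain_iff_pairwise, List.isChain_iff_getElem]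
  intro i h
  by_contra hlt
  push_neg at hlt
  refine forward_adj α lam hα hlam hrows i (by omega) ?_ hsymm
  rw [α.getD_eq_getElem 0 (by omega), α.getD_eq_getElem 0 (by omega)]
  simpa [List.get_eq_getElem] using hlt

/-! ### From adjacent-swap invariance to full symmetry -/

lemma swap_eq_triple {a b : ℕ} (hab : a + 1 < b) :
    ⇑(Equiv.swap a b) =
      ⇑(Equiv.swap (b - 1) b) ∘ ⇑(Equiv.swap a (b - 1)) ∘ ⇑(Equiv.swap (b - 1) b) := by
  funext x
  simp only [Function.comp_apply, Equiv.swap_apply_def]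
  split_ifs <;> omega

lemma isSymmFn_of_swaps (f : MvPowerSeries ℕ ℚ)
    (h : ∀ (p : ℕ) (d : ℕ →₀ ℕ),
      MvPowerSeries.coeff (Finsupp.mapDomain (⇑(Equiv.swap p (p + 1))) d) f =
        MvPowerSeries.coeff d f) : IsSymmFn f := by
  classical
  -- arbitrary swaps, `a ≤ b`
  have key : ∀ (m a b : ℕ), a ≤ b → b - a = m → ∀ d : ℕ →₀ ℕ,
      MvPowerSeries.coeff (Finsupp.mapDomain (⇑(Equiv.swap a b)) d) f =
        MvPowerSeries.coeff d f := by
    intro m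
    induction m using Nat.strong_induction_on with
    | _ m ih =>
      intro a b hab hm d
      rcases eq_or_lt_of_le hab with rfl | hlt
      · rw [Equiv.swap_self]
        rw [show ⇑(Equiv.refl ℕ) = id from rfl, Finsupp.mapDomain_id]
      rcases eq_or_lt_of_le (Nat.succ_le_of_lt hlt) with he | hlt2
      · rw [← he]; exact h a d
      · have hb1 : b - 1 + 1 = b := by omega
        have h' : ∀ e : ℕ →₀ ℕ,
            MvPowerSeries.coeff (Finsupp.mapDomain (⇑(Equiv.swap (b - 1) b)) e) f =
              MvPowerSeries.coeff e f := by
          intro e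
          have := h (b - 1) e
          rwa [hb1] at this
        rw [swap_eq_triple hlt2, Finsupp.mapDomain_comp, Finsupp.mapDomain_comp, h',
          ih (b - 1 - a) (by omega) a (b - 1) (by omega) rfl, h']
  have keyall : ∀ (a b : ℕ) (d : ℕ →₀ ℕ),
      MvPowerSeries.coeff (Finsupp.mapDomain (⇑(Equiv.swap a b)) d) f =
        MvPowerSeries.coeff d f := by
    intro a b d
    rcases Nat.le_total a b with hab | hab
    · exact key (b - a) a b hab rfl d
    · rw [Equiv.swap_comm]
      exact key (a - b) b a hab rfl d
  -- general permutations, by induction on the number of moved support points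
  have main : ∀ (m : ℕ) (σ : Equiv.Perm ℕ) (d : ℕ →₀ ℕ),
      (d.support.filter fun x => σ x ≠ x).card = m →
      MvPowerSeries.coeff (Finsupp.mapDomain (⇑σ) d) f = MvPowerSeries.coeff d f := by
    intro m
    induction m using Nat.strong_induction_on with
    | _ m ih =>
      intro σ d hm
      rcases Nat.eq_zero_or_pos m with h0 | hpos
      · have hfix : ∀ x ∈ d.support, σ x = x := by
          intro x hx
          by_contra hne
          have hmem : x ∈ d.support.filter fun x => σ x ≠ x :=
            Finset.mem_filter.2 ⟨hx, hne⟩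
          have := Finset.card_ne_zero_of_mem hmem
          omega
        have hd : Finsupp.mapDomain (⇑σ) d = d := by
          ext v
          rw [show (⇑σ) = ⇑(σ : ℕ ≃ ℕ) from rfl, Finsupp.mapDomain_equiv_apply]
          by_cases hv : σ.symm v ∈ d.support
          · have h1 := hfix _ hv
            rw [Equiv.apply_symm_apply] at h1
            rw [← h1]
          · rw [Finsupp.notMem_support_iff.1 hv]
            by_cases hv2 : v ∈ d.support
            · exfalso
              apply hv
              have h2 := hfix v hv2
              have : σ.symm v = v := by
                conv_lhs => rw [← h2]
                rw [Equiv.symm_apply_apply]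
              rwa [this]
            · exact (Finsupp.notMem_support_iff.1 hv2).symm
        rw [hd]
      · obtain ⟨x, hx⟩ := Finset.card_pos.1 (hm ▸ hpos)
        obtain ⟨hxs, hxne⟩ := Finset.mem_filter.1 hx
        set τ := Equiv.swap x (σ x) with hτ
        have hcomp : (⇑σ) = ⇑τ ∘ ⇑(σ.trans τ) := by
          funext y
          simp [hτ, Equiv.swap_apply_self]
        have hsub : (d.support.filter fun y => (σ.trans τ) y ≠ y) ⊂
            (d.support.filter fun y => σ y ≠ y) := by
          constructor
          · intro y hy
            obtain ⟨hys, hyne⟩ := Finset.mem_filter.1 hy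
            refine Finset.mem_filter.2 ⟨hys, fun hfix => hyne ?_⟩
            have hy1 : y ≠ x := fun he => hxne (he ▸ hfix)
            have hy2 : y ≠ σ x := by
              intro he
              apply hxne
              have : σ y = y := hfix
              rw [he] at this
              exact σ.injective this
            show τ (σ y) = y
            rw [hfix, hτ, Equiv.swap_apply_of_ne_of_ne hy1 hy2]
          · intro hcontra
            have hmemx : x ∈ d.support.filter fun y => σ y ≠ y := hx
            have := hcontra hmemx
            obtain ⟨_, hne⟩ := Finset.mem_filter.1 this
            apply hne
            show τ (σ x) = x
            rw [hτ, Equiv.swap_apply_right]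
        rw [hcomp, Finsupp.mapDomain_comp, keyall,
          ih _ (by rw [← hm]; exact Finset.card_lt_card hsub) (σ.trans τ) d rfl]
  intro σ d
  exact main _ σ d rfl

/-! ### The Bender–Knuth involution for row-strict tableaux -/

section BK

variable (s : Finset (ℕ × ℕ)) (k : ℕ)

/-- A cell with entry `k` paired with a `k+1` to its right. -/
def PairedK (T : ℕ × ℕ → ℕ) (c : ℕ × ℕ) : Prop :=
  T c = k ∧ (c.1, c.2 + 1) ∈ s ∧ T (c.1, c.2 + 1) = k + 1

/-- A cell with entry `k+1` paired with a `k` to its left. -/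
def PairedK1 (T : ℕ × ℕ → ℕ) (c : ℕ × ℕ) : Prop :=
  T c = k + 1 ∧ 0 < c.2 ∧ (c.1, c.2 - 1) ∈ s ∧ T (c.1, c.2 - 1) = k

/-- A free cell: entry `k` or `k+1`, not paired. -/
def Fr (T : ℕ × ℕ → ℕ) (c : ℕ × ℕ) : Prop :=
  c ∈ s ∧ (T c = k ∨ T c = k + 1) ∧ ¬ PairedK s k T c ∧ ¬ PairedK1 s k T c

/-- Bottom row of the free cells in a column. -/
noncomputable def loF (T : ℕ × ℕ → ℕ) (j : ℕ) : ℕ := sInf {r | Fr s k T (r, j)}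

/-- Top row of the free cells in a column. -/
noncomputable def hiF (T : ℕ × ℕ → ℕ) (j : ℕ) : ℕ := sSup {r | Fr s k T (r, j)}

/-- The Bender–Knuth move: reverse-and-flip the free cells in every column. -/
noncomputable def bk (T : ℕ × ℕ → ℕ) : ℕ × ℕ → ℕ := fun c =>
  if Fr s k T c then 2 * k + 1 - T (loF s k T c.2 + hiF s k T c.2 - c.1, c.2) else T c

variable {s k}

lemma pairedK_def {T : ℕ × ℕ → ℕ} {r j : ℕ} : PairedK s k T (r, j) ↔
    (T (r, j) = k ∧ (r, j + 1) ∈ s ∧ T (r, j + 1) = k + 1) := Iff.rfl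

lemma pairedK1_def {T : ℕ × ℕ → ℕ} {r j : ℕ} : PairedK1 s k T (r, j) ↔
    (T (r, j) = k + 1 ∧ 0 < j ∧ (r, j - 1) ∈ s ∧ T (r, j - 1) = k) := Iff.rfl

lemma fr_def {T : ℕ × ℕ → ℕ} {r j : ℕ} : Fr s k T (r, j) ↔
    ((r, j) ∈ s ∧ (T (r, j) = k ∨ T (r, j) = k + 1) ∧
      ¬ PairedK s k T (r, j) ∧ ¬ PairedK1 s k T (r, j)) := Iff.rfl

lemma freeSet_finite (T : ℕ × ℕ → ℕ) (j : ℕ) : {r | Fr s k T (r, j)}.Finite :=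
  Set.Finite.subset (s.finite_toSet.image Prod.fst)
    (fun r hr => ⟨(r, j), hr.1, rfl⟩)

lemma lo_le {T : ℕ × ℕ → ℕ} {r j : ℕ} (h : Fr s k T (r, j)) : loF s k T j ≤ r :=
  Nat.sInf_le h

lemma le_hi {T : ℕ × ℕ → ℕ} {r j : ℕ} (h : Fr s k T (r, j)) : r ≤ hiF s k T j :=
  le_csSup (freeSet_finite T j).bddAbove h

lemma lo_free {T : ℕ × ℕ → ℕ} {r j : ℕ} (h : Fr s k T (r, j)) :
    Fr s k T (loF s k T j, j) :=
  Nat.sInf_mem (⟨r, h⟩ : {r | Fr s k T (r, j)}.Nonempty)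

lemma hi_free {T : ℕ × ℕ → ℕ} {r j : ℕ} (h : Fr s k T (r, j)) :
    Fr s k T (hiF s k T j, j) :=
  Nat.sSup_mem ⟨r, h⟩ (freeSet_finite T j).bddAbove

/-- Abstract shape hypotheses for the Bender–Knuth argument. -/
structure BKShape (s : Finset (ℕ × ℕ)) : Prop where
  hrow : ∀ r j j'' j', (r, j) ∈ s → (r, j') ∈ s → j ≤ j'' → j'' ≤ j' → (r, j'') ∈ s
  hright : ∀ r'' r j, r'' < r → (r'', j) ∈ s → (r, j + 1) ∈ s → (r'', j + 1) ∈ s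
  hleft : ∀ r r'' j, r < r'' → (r'', j) ∈ s → 0 < j → (r, j - 1) ∈ s → (r'', j - 1) ∈ s
  hcolint : ∀ r r'' r' j, r ≤ r'' → r'' ≤ r' → (r, j) ∈ s → (r', j) ∈ s → (r'', j) ∈ s

variable {T : ℕ × ℕ → ℕ} (hsh : BKShape s)
  (hcolT : ColCond s (· ≤ ·) T) (hrowT : RowCond s (· < ·) T)

include hsh hcolT hrowT

lemma pairedK_down {r r'' j : ℕ} (h : PairedK s k T (r, j)) (hlt : r'' < r)
    (hmem : (r'', j) ∈ s) (hval : T (r'', j) = k) : PairedK s k T (r'', j) := by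
  obtain ⟨hv, hrs, hrv⟩ := pairedK_def.1 h
  have hmem' : (r'', j + 1) ∈ s := hsh.hright r'' r j hlt hmem hrs
  have h1 := hrowT r'' j (j + 1) hmem hmem' (by omega)
  have h2 := hcolT r'' r (j + 1) hmem' hrs hlt
  exact pairedK_def.2 ⟨hval, hmem', by omega⟩

lemma pairedK1_up {r r'' j : ℕ} (h : PairedK1 s k T (r, j)) (hlt : r < r'')
    (hmem : (r'', j) ∈ s) (hval : T (r'', j) = k + 1) : PairedK1 s k T (r'', j) := by
  obtain ⟨hv, hj, hrs, hrv⟩ := pairedK1_def.1 h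
  have hmem' : (r'', j - 1) ∈ s := hsh.hleft r r'' j hlt hmem hj hrs
  have h1 := hrowT r'' (j - 1) j hmem' hmem (by omega)
  have h2 := hcolT r r'' (j - 1) hrs hmem' hlt
  exact pairedK1_def.2 ⟨hval, hj, hmem', by omega⟩

lemma free_interval {r r' r'' j : ℕ} (h : Fr s k T (r, j)) (h' : Fr s k T (r', j))
    (h1 : r ≤ r'') (h2 : r'' ≤ r') : Fr s k T (r'', j) := by
  obtain ⟨hm, hv, hpk, hpk1⟩ := fr_def.1 h
  obtain ⟨hm', hv', hpk', hpk1'⟩ := fr_def.1 h'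
  have hmem : (r'', j) ∈ s := hsh.hcolint r r'' r' j h1 h2 hm hm'
  have hle1 : T (r, j) ≤ T (r'', j) := by
    rcases eq_or_lt_of_le h1 with rfl | hlt
    · exact le_rfl
    · exact hcolT _ _ _ hm hmem hlt
  have hle2 : T (r'', j) ≤ T (r', j) := by
    rcases eq_or_lt_of_le h2 with rfl | hlt
    · exact le_rfl
    · exact hcolT _ _ _ hmem hm' hlt
  have hval : T (r'', j) = k ∨ T (r'', j) = k + 1 := by omega
  refine fr_def.2 ⟨hmem, hval, fun hp => ?_, fun hp => ?_⟩
  · -- a paired k at r'' propagates down to r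
    have hvk : T (r'', j) = k := hp.1
    have hvrk : T (r, j) = k := by omega
    rcases eq_or_lt_of_le h1 with rfl | hlt
    · exact hpk hp
    · exact hpk (pairedK_down hsh hcolT hrowT hp hlt hm hvrk)
  · have hvk : T (r'', j) = k + 1 := hp.1
    have hvrk : T (r', j) = k + 1 := by omega
    rcases eq_or_lt_of_le h2 with rfl | hlt
    · exact hpk1' hp
    · exact hpk1' (pairedK1_up hsh hcolT hrowT hp hlt hm' hvrk)

omit hsh hcolT in
lemma free_right {r j : ℕ} (h : Fr s k T (r, j)) (hmem : (r, j + 1) ∈ s) :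
    k + 2 ≤ T (r, j + 1) := by
  obtain ⟨hm, hv, hpk, hpk1⟩ := fr_def.1 h
  have h1 := hrowT r j (j + 1) hm hmem (by omega)
  rcases hv with hv | hv
  · by_contra hcon
    exact hpk (pairedK_def.2 ⟨hv, hmem, by omega⟩)
  · omega

omit hsh hcolT in
lemma free_left {r j : ℕ} (h : Fr s k T (r, j)) (hj : 0 < j)
    (hmem : (r, j - 1) ∈ s) : T (r, j - 1) < k := by
  obtain ⟨hm, hv, hpk, hpk1⟩ := fr_def.1 h
  have h1 := hrowT r (j - 1) j hmem hm (by omega)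
  rcases hv with hv | hv
  · omega
  · by_contra hcon
    exact hpk1 (pairedK1_def.2 ⟨hv, hj, hmem, by omega⟩)

lemma mirror_free {r j : ℕ} (h : Fr s k T (r, j)) :
    Fr s k T (loF s k T j + hiF s k T j - r, j) :=
  free_interval hsh hcolT hrowT (lo_free h) (hi_free h)
    (by have := lo_le h; have := le_hi h; omega)
    (by have := lo_le h; have := le_hi h; omega)

omit hsh hcolT hrowT in
lemma bk_free_val {r j : ℕ} (h : Fr s k T (r, j)) :
    bk s k T (r, j) = 2 * k + 1 - T (loF s k T j + hiF s k T j - r, j) := by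
  unfold bk
  rw [if_pos h]

omit hsh hcolT hrowT in
lemma bk_nonfree_val {c : ℕ × ℕ} (h : ¬ Fr s k T c) : bk s k T c = T c := by
  unfold bk
  rw [if_neg h]

lemma bk_free_range {r j : ℕ} (h : Fr s k T (r, j)) :
    bk s k T (r, j) = k ∨ bk s k T (r, j) = k + 1 := by
  rw [bk_free_val h]
  have := (mirror_free hsh hcolT hrowT h).2.1
  omega

omit hsh hcolT hrowT in
lemma nonfree_k {c : ℕ × ℕ} (hm : c ∈ s) (hnf : ¬ Fr s k T c) (hv : T c = k) :
    PairedK s k T c := by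
  unfold Fr at hnf
  push_neg at hnf
  rcases Classical.em (PairedK s k T c) with h | h
  · exact h
  · exfalso
    have := hnf hm (Or.inl hv) h
    exact absurd this.1 (by omega)

omit hsh hcolT hrowT in
lemma nonfree_k1 {c : ℕ × ℕ} (hm : c ∈ s) (hnf : ¬ Fr s k T c) (hv : T c = k + 1) :
    PairedK1 s k T c := by
  unfold Fr at hnf
  push_neg at hnf
  rcases Classical.em (PairedK1 s k T c) with h | h
  · exact h
  · exfalso
    rcases Classical.em (PairedK s k T c) with h2 | h2
    · exact absurd h2.1 (by omega)
    · exact h2 (by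
        have := hnf hm (Or.inr hv)
        tauto)

end BK

section BK2

variable {s : Finset (ℕ × ℕ)} {k : ℕ} {T : ℕ × ℕ → ℕ} (hsh : BKShape s)
  (hcolT : ColCond s (· ≤ ·) T) (hrowT : RowCond s (· < ·) T)

include hsh

lemma rowCond_of_adj {f : ℕ × ℕ → ℕ}
    (hadj : ∀ r j, (r, j) ∈ s → (r, j + 1) ∈ s → f (r, j) < f (r, j + 1)) :
    RowCond s (· < ·) f := by
  intro r j j' hj hj' hjj'
  have key : ∀ t, (r, j + t + 1) ∈ s → f (r, j) < f (r, j + t + 1) := by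
    intro t
    induction t with
    | zero => intro h1; exact hadj r j hj h1
    | succ t ih =>
      intro h1
      have hmid : (r, j + t + 1) ∈ s :=
        hsh.hrow r j (j + t + 1) (j + t + 1 + 1) hj h1 (by omega) (by omega)
      exact lt_trans (ih hmid) (hadj r (j + t + 1) hmid h1)
  have ht : j' = j + (j' - j - 1) + 1 := by omega
  rw [ht] at hj' ⊢
  exact key _ hj'

include hcolT hrowT

lemma bk_row_adj {r j : ℕ} (h1 : (r, j) ∈ s) (h2 : (r, j + 1) ∈ s) :
    bk s k T (r, j) < bk s k T (r, j + 1) := by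
  by_cases hf : Fr s k T (r, j)
  · have hge := free_right hrowT hf h2
    have hnf : ¬ Fr s k T (r, j + 1) := by
      intro hc
      have := (fr_def.1 hc).2.1
      omega
    rw [bk_nonfree_val hnf]
    have := bk_free_range hsh hcolT hrowT hf
    omega
  · by_cases hf' : Fr s k T (r, j + 1)
    · rw [bk_nonfree_val hf]
      have hlt := hrowT r j (j + 1) h1 h2 (by omega)
      have hrange := bk_free_range hsh hcolT hrowT hf'
      have hvk := (fr_def.1 hf').2.1
      have hnk : T (r, j) ≠ k := by
        intro he
        have hv1 : T (r, j + 1) = k + 1 := by omega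
        exact (fr_def.1 hf').2.2.2
          (pairedK1_def.2 ⟨hv1, by omega, by simpa using h1, by simpa using he⟩)
      omega
    · rw [bk_nonfree_val hf, bk_nonfree_val hf']
      exact hrowT r j (j + 1) h1 h2 (by omega)

lemma bk_rowCond : RowCond s (· < ·) (bk s k T) :=
  rowCond_of_adj hsh (fun _ _ h1 h2 => bk_row_adj hsh hcolT hrowT h1 h2)

lemma bk_colCond : ColCond s (· ≤ ·) (bk s k T) := by
  intro r r' j h1 h2 hlt
  by_cases hf : Fr s k T (r, j) <;> by_cases hf' : Fr s k T (r', j)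
  · -- both free
    rw [bk_free_val hf, bk_free_val hf']
    have hr1 := lo_le hf
    have hr2 := le_hi hf
    have hr3 := lo_le hf'
    have hr4 := le_hi hf'
    have hm1 := mirror_free hsh hcolT hrowT hf
    have hm2 := mirror_free hsh hcolT hrowT hf'
    have hTle : T (loF s k T j + hiF s k T j - r', j) ≤
        T (loF s k T j + hiF s k T j - r, j) :=
      hcolT _ _ _ hm2.1 hm1.1 (by omega)
    exact Nat.sub_le_sub_left hTle _
  · -- lower cell free, upper not
    have hTc' : k + 1 ≤ T (r', j) := by
      by_contra hcon
      push_neg at hcon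
      have hle := hcolT r r' j h1 h2 hlt
      have hvals := (fr_def.1 hf).2.1
      have hvk : T (r, j) = k := by omega
      have hvk' : T (r', j) = k := by omega
      have hp := nonfree_k h2 hf' hvk'
      exact (fr_def.1 hf).2.2.1 (pairedK_down hsh hcolT hrowT hp hlt h1 hvk)
    rw [bk_nonfree_val hf']
    have := bk_free_range hsh hcolT hrowT hf
    omega
  · -- lower not free, upper free
    have hTc : T (r, j) ≤ k := by
      by_contra hcon
      push_neg at hcon
      have hle := hcolT r r' j h1 h2 hlt
      have hvals := (fr_def.1 hf').2.1
      have hvk' : T (r', j) = k + 1 := by omega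
      have hvk : T (r, j) = k + 1 := by omega
      have hp := nonfree_k1 h1 hf hvk
      exact (fr_def.1 hf').2.2.2 (pairedK1_up hsh hcolT hrowT hp hlt h2 hvk')
    rw [bk_nonfree_val hf]
    have := bk_free_range hsh hcolT hrowT hf'
    omega
  · rw [bk_nonfree_val hf, bk_nonfree_val hf']
    exact hcolT r r' j h1 h2 hlt

omit hsh hcolT hrowT in
lemma bk_filling (hfill : IsFilling s T) : IsFilling s (bk s k T) := by
  intro c hc
  rw [bk_nonfree_val (fun hfr => hc hfr.1), hfill c hc]

end BK2

section BK3

variable {s : Finset (ℕ × ℕ)} {k : ℕ} {T : ℕ × ℕ → ℕ} (hsh : BKShape s)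
  (hcolT : ColCond s (· ≤ ·) T) (hrowT : RowCond s (· < ·) T)

include hsh hcolT hrowT

omit hsh hcolT hrowT in
lemma card_paired :
    (s.filter fun c => PairedK s k T c).card =
      (s.filter fun c => PairedK1 s k T c).card := by
  refine Finset.card_bij' (fun c _ => (c.1, c.2 + 1)) (fun c _ => (c.1, c.2 - 1))
    ?_ ?_ ?_ ?_
  · rintro ⟨r, j⟩ ha
    obtain ⟨hms, hp⟩ := Finset.mem_filter.1 ha
    obtain ⟨hv, hmem, hv1⟩ := pairedK_def.1 hp
    exact Finset.mem_filter.2 ⟨hmem, pairedK1_def.2 ⟨hv1, by omega, by simpa using hms,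
      by simpa using hv⟩⟩
  · rintro ⟨r, j⟩ hb
    obtain ⟨hms, hp⟩ := Finset.mem_filter.1 hb
    obtain ⟨hv, hj, hmem, hv1⟩ := pairedK1_def.1 hp
    have hj1 : j - 1 + 1 = j := by omega
    refine Finset.mem_filter.2 ⟨hmem, pairedK_def.2 ⟨hv1, ?_, ?_⟩⟩
    · rw [hj1]; exact hms
    · rw [hj1]; exact hv
  · rintro ⟨r, j⟩ ha
    simp
  · rintro ⟨r, j⟩ hb
    obtain ⟨hms, hp⟩ := Finset.mem_filter.1 hb
    obtain ⟨hv, hj, hmem, hv1⟩ := pairedK1_def.1 hp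
    simp only [Prod.mk.injEq]
    exact ⟨trivial, by omega⟩

lemma card_mirror (v : ℕ) :
    (s.filter fun c => Fr s k T c ∧
        T (loF s k T c.2 + hiF s k T c.2 - c.1, c.2) = v).card =
      (s.filter fun c => Fr s k T c ∧ T c = v).card := by
  have hmirmir : ∀ r j, Fr s k T (r, j) →
      loF s k T j + hiF s k T j - (loF s k T j + hiF s k T j - r) = r := by
    intro r j h
    have := lo_le h
    have := le_hi h
    omega
  refine Finset.card_bij'
    (fun c _ => (loF s k T c.2 + hiF s k T c.2 - c.1, c.2))
    (fun c _ => (loF s k T c.2 + hiF s k T c.2 - c.1, c.2)) ?_ ?_ ?_ ?_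
  · rintro ⟨r, j⟩ ha
    have hms := (Finset.mem_filter.1 ha).1
    have hfr := (Finset.mem_filter.1 ha).2.1
    have hval := (Finset.mem_filter.1 ha).2.2
    have hmf := mirror_free hsh hcolT hrowT hfr
    exact Finset.mem_filter.2 ⟨hmf.1, hmf, hval⟩
  · rintro ⟨r, j⟩ hb
    have hms := (Finset.mem_filter.1 hb).1
    have hfr := (Finset.mem_filter.1 hb).2.1
    have hval := (Finset.mem_filter.1 hb).2.2
    have hmf := mirror_free hsh hcolT hrowT hfr
    refine Finset.mem_filter.2 ⟨hmf.1, hmf, ?_⟩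
    show T (loF s k T j + hiF s k T j - (loF s k T j + hiF s k T j - r), j) = v
    rw [hmirmir r j hfr]
    exact hval
  · rintro ⟨r, j⟩ ha
    have hms := (Finset.mem_filter.1 ha).1
    have hfr := (Finset.mem_filter.1 ha).2.1
    have hval := (Finset.mem_filter.1 ha).2.2
    show ((loF s k T j + hiF s k T j - (loF s k T j + hiF s k T j - r), j) : ℕ × ℕ)
      = (r, j)
    simp only [Prod.mk.injEq]
    exact ⟨hmirmir r j hfr, trivial⟩
  · rintro ⟨r, j⟩ hb
    have hms := (Finset.mem_filter.1 hb).1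
    have hfr := (Finset.mem_filter.1 hb).2.1
    have hval := (Finset.mem_filter.1 hb).2.2
    show ((loF s k T j + hiF s k T j - (loF s k T j + hiF s k T j - r), j) : ℕ × ℕ)
      = (r, j)
    simp only [Prod.mk.injEq]
    exact ⟨hmirmir r j hfr, trivial⟩

lemma bk_filter_k :
    s.filter (fun c => bk s k T c = k) =
      (s.filter fun c => PairedK s k T c) ∪
        (s.filter fun c => Fr s k T c ∧
          T (loF s k T c.2 + hiF s k T c.2 - c.1, c.2) = k + 1) := by
  ext ⟨r, j⟩
  simp only [Finset.mem_filter, Finset.mem_union]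
  constructor
  · rintro ⟨hms, hval⟩
    by_cases hf : Fr s k T (r, j)
    · refine Or.inr ⟨hms, hf, ?_⟩
      rw [bk_free_val hf] at hval
      have := (mirror_free hsh hcolT hrowT hf).2.1
      omega
    · rw [bk_nonfree_val hf] at hval
      exact Or.inl ⟨hms, nonfree_k hms hf hval⟩
  · rintro (⟨hms, hp⟩ | ⟨hms, hf, hval⟩)
    · have hnf : ¬ Fr s k T (r, j) := fun hf => hf.2.2.1 hp
      rw [bk_nonfree_val hnf]
      exact ⟨hms, hp.1⟩
    · rw [bk_free_val hf, hval]
      exact ⟨hms, by omega⟩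

lemma bk_filter_k1 :
    s.filter (fun c => bk s k T c = k + 1) =
      (s.filter fun c => PairedK1 s k T c) ∪
        (s.filter fun c => Fr s k T c ∧
          T (loF s k T c.2 + hiF s k T c.2 - c.1, c.2) = k) := by
  ext ⟨r, j⟩
  simp only [Finset.mem_filter, Finset.mem_union]
  constructor
  · rintro ⟨hms, hval⟩
    by_cases hf : Fr s k T (r, j)
    · refine Or.inr ⟨hms, hf, ?_⟩
      rw [bk_free_val hf] at hval
      have := (mirror_free hsh hcolT hrowT hf).2.1
      omega
    · rw [bk_nonfree_val hf] at hval
      exact Or.inl ⟨hms, nonfree_k1 hms hf hval⟩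
  · rintro (⟨hms, hp⟩ | ⟨hms, hf, hval⟩)
    · have hnf : ¬ Fr s k T (r, j) := fun hf => hf.2.2.2 hp
      rw [bk_nonfree_val hnf]
      exact ⟨hms, hp.1⟩
    · rw [bk_free_val hf, hval]
      exact ⟨hms, by omega⟩

omit hsh hcolT hrowT in
lemma t_filter_k1 :
    s.filter (fun c => T c = k + 1) =
      (s.filter fun c => PairedK1 s k T c) ∪
        (s.filter fun c => Fr s k T c ∧ T c = k + 1) := by
  ext ⟨r, j⟩
  simp only [Finset.mem_filter, Finset.mem_union]
  constructor
  · rintro ⟨hms, hval⟩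
    by_cases hf : Fr s k T (r, j)
    · exact Or.inr ⟨hms, hf, hval⟩
    · exact Or.inl ⟨hms, nonfree_k1 hms hf hval⟩
  · rintro (⟨hms, hp⟩ | ⟨hms, hf, hval⟩)
    · exact ⟨hms, hp.1⟩
    · exact ⟨hms, hval⟩

omit hsh hcolT hrowT in
lemma t_filter_k :
    s.filter (fun c => T c = k) =
      (s.filter fun c => PairedK s k T c) ∪
        (s.filter fun c => Fr s k T c ∧ T c = k) := by
  ext ⟨r, j⟩
  simp only [Finset.mem_filter, Finset.mem_union]
  constructor
  · rintro ⟨hms, hval⟩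
    by_cases hf : Fr s k T (r, j)
    · exact Or.inr ⟨hms, hf, hval⟩
    · exact Or.inl ⟨hms, nonfree_k hms hf hval⟩
  · rintro (⟨hms, hp⟩ | ⟨hms, hf, hval⟩)
    · exact ⟨hms, hp.1⟩
    · exact ⟨hms, hval⟩

lemma bk_content :
    content s (bk s k T) =
      Finsupp.mapDomain (⇑(Equiv.swap k (k + 1))) (content s T) := by
  have hd1 : Disjoint (s.filter fun c => PairedK s k T c)
      (s.filter fun c => Fr s k T c ∧
        T (loF s k T c.2 + hiF s k T c.2 - c.1, c.2) = k + 1) := by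
    refine Finset.disjoint_left.2 fun c hc1 hc2 => ?_
    exact (Finset.mem_filter.1 hc2).2.1.2.2.1 (Finset.mem_filter.1 hc1).2
  have hd2 : Disjoint (s.filter fun c => PairedK1 s k T c)
      (s.filter fun c => Fr s k T c ∧ T c = k + 1) := by
    refine Finset.disjoint_left.2 fun c hc1 hc2 => ?_
    exact (Finset.mem_filter.1 hc2).2.1.2.2.2 (Finset.mem_filter.1 hc1).2
  have hd3 : Disjoint (s.filter fun c => PairedK1 s k T c)
      (s.filter fun c => Fr s k T c ∧
        T (loF s k T c.2 + hiF s k T c.2 - c.1, c.2) = k) := by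
    refine Finset.disjoint_left.2 fun c hc1 hc2 => ?_
    exact (Finset.mem_filter.1 hc2).2.1.2.2.2 (Finset.mem_filter.1 hc1).2
  have hd4 : Disjoint (s.filter fun c => PairedK s k T c)
      (s.filter fun c => Fr s k T c ∧ T c = k) := by
    refine Finset.disjoint_left.2 fun c hc1 hc2 => ?_
    exact (Finset.mem_filter.1 hc2).2.1.2.2.1 (Finset.mem_filter.1 hc1).2
  ext v
  rw [show (⇑(Equiv.swap k (k + 1))) = ⇑(Equiv.swap k (k + 1) : ℕ ≃ ℕ) from rfl,
    Finsupp.mapDomain_equiv_apply, Equiv.symm_swap, content_apply, content_apply]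
  rcases eq_or_ne v k with hv | hvk
  · rw [hv, Equiv.swap_apply_left, bk_filter_k hsh hcolT hrowT, t_filter_k1,
      Finset.card_union_of_disjoint hd1, Finset.card_union_of_disjoint hd2,
      card_paired, card_mirror hsh hcolT hrowT (k + 1)]
  rcases eq_or_ne v (k + 1) with hv | hvk1
  · rw [hv, Equiv.swap_apply_right, bk_filter_k1 hsh hcolT hrowT, t_filter_k,
      Finset.card_union_of_disjoint hd3, Finset.card_union_of_disjoint hd4,
      card_paired, card_mirror hsh hcolT hrowT k]
  · rw [Equiv.swap_apply_of_ne_of_ne hvk hvk1]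
    congr 1
    apply Finset.filter_congr
    rintro ⟨r, j⟩ hms
    by_cases hf : Fr s k T (r, j)
    · have h1 := bk_free_range hsh hcolT hrowT hf
      have h2 := (fr_def.1 hf).2.1
      constructor
      · intro h; omega
      · intro h; omega
    · rw [bk_nonfree_val hf]

end BK3

section BK4

variable {s : Finset (ℕ × ℕ)} {k : ℕ} {T : ℕ × ℕ → ℕ} (hsh : BKShape s)
  (hcolT : ColCond s (· ≤ ·) T) (hrowT : RowCond s (· < ·) T)

include hsh hcolT hrowT

lemma fr_bk {r j : ℕ} (h : Fr s k T (r, j)) : Fr s k (bk s k T) (r, j) := by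
  refine fr_def.2 ⟨h.1, bk_free_range hsh hcolT hrowT h, ?_, ?_⟩
  · intro hp
    obtain ⟨hv, hmem, hval⟩ := pairedK_def.1 hp
    have hge := free_right hrowT h hmem
    have hnf : ¬ Fr s k T (r, j + 1) := fun hc => by
      have := (fr_def.1 hc).2.1; omega
    rw [bk_nonfree_val hnf] at hval
    omega
  · intro hp
    obtain ⟨hv, hj, hmem, hval⟩ := pairedK1_def.1 hp
    have hlt := free_left hrowT h hj hmem
    have hnf : ¬ Fr s k T (r, j - 1) := fun hc => by
      have := (fr_def.1 hc).2.1; omega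
    rw [bk_nonfree_val hnf] at hval
    omega

omit hsh hcolT hrowT in
lemma fr_bk_rev {r j : ℕ} (h : Fr s k (bk s k T) (r, j)) : Fr s k T (r, j) := by
  by_contra hnf
  have hms : (r, j) ∈ s := h.1
  have hval : bk s k T (r, j) = T (r, j) := bk_nonfree_val hnf
  have hvs := (fr_def.1 h).2.1
  rw [hval] at hvs
  rcases hvs with hv | hv
  · have hp := nonfree_k hms hnf hv
    obtain ⟨hv0, hmem, hv1⟩ := pairedK_def.1 hp
    have hp1 : PairedK1 s k T (r, j + 1) :=
      pairedK1_def.2 ⟨hv1, by omega, by simpa using hms, by simpa using hv0⟩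
    have hnf1 : ¬ Fr s k T (r, j + 1) := fun hc => (fr_def.1 hc).2.2.2 hp1
    exact (fr_def.1 h).2.2.1 (pairedK_def.2 ⟨by rw [hval]; exact hv0, hmem,
      by rw [bk_nonfree_val hnf1]; exact hv1⟩)
  · have hp := nonfree_k1 hms hnf hv
    obtain ⟨hv0, hj, hmem, hv1⟩ := pairedK1_def.1 hp
    have hj1 : j - 1 + 1 = j := by omega
    have hpK : PairedK s k T (r, j - 1) :=
      pairedK_def.2 ⟨hv1, by rw [hj1]; exact hms, by rw [hj1]; exact hv0⟩
    have hnf1 : ¬ Fr s k T (r, j - 1) := fun hc => (fr_def.1 hc).2.2.1 hpK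
    exact (fr_def.1 h).2.2.2 (pairedK1_def.2 ⟨by rw [hval]; exact hv0, hj, hmem,
      by rw [bk_nonfree_val hnf1]; exact hv1⟩)

lemma loF_bk (j : ℕ) : loF s k (bk s k T) j = loF s k T j := by
  unfold loF
  congr 1
  ext r
  exact ⟨fun h => fr_bk_rev h, fun h => fr_bk hsh hcolT hrowT h⟩

lemma hiF_bk (j : ℕ) : hiF s k (bk s k T) j = hiF s k T j := by
  unfold hiF
  congr 1
  ext r
  exact ⟨fun h => fr_bk_rev h, fun h => fr_bk hsh hcolT hrowT h⟩

lemma bk_bk : bk s k (bk s k T) = T := by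
  funext c
  obtain ⟨r, j⟩ := c
  by_cases hf : Fr s k T (r, j)
  · have hfb := fr_bk hsh hcolT hrowT hf
    rw [bk_free_val hfb]
    rw [loF_bk hsh hcolT hrowT, hiF_bk hsh hcolT hrowT]
    have hmf := mirror_free hsh hcolT hrowT hf
    rw [bk_free_val hmf]
    have harr : loF s k T j + hiF s k T j - (loF s k T j + hiF s k T j - r) = r := by
      have := lo_le hf
      have := le_hi hf
      omega
    rw [harr]
    have h1 := (fr_def.1 hf).2.1
    omega
  · rw [bk_nonfree_val (fun hc => hf (fr_bk_rev hc)), bk_nonfree_val hf]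

end BK4

/-- The Bender–Knuth bijection on the level of cardinalities. -/
lemma bk_card_eq {s : Finset (ℕ × ℕ)} (hsh : BKShape s) (k : ℕ) (d : ℕ →₀ ℕ) :
    Nat.card {T : ℕ × ℕ → ℕ // IsFilling s T ∧
        (ColCond s (· ≤ ·) T ∧ RowCond s (· < ·) T) ∧
        content s T = Finsupp.mapDomain (⇑(Equiv.swap k (k + 1))) d} =
      Nat.card {T : ℕ × ℕ → ℕ // IsFilling s T ∧
        (ColCond s (· ≤ ·) T ∧ RowCond s (· < ·) T) ∧ content s T = d} := by
  have hswapswap : ∀ (e : ℕ →₀ ℕ),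
      Finsupp.mapDomain (⇑(Equiv.swap k (k + 1)))
        (Finsupp.mapDomain (⇑(Equiv.swap k (k + 1))) e) = e := by
    intro e
    rw [← Finsupp.mapDomain_comp]
    have hid : (⇑(Equiv.swap k (k + 1))) ∘ (⇑(Equiv.swap k (k + 1))) = id := by
      funext x
      simp [Equiv.swap_apply_self]
    rw [hid, Finsupp.mapDomain_id]
  refine Nat.card_congr ⟨?_, ?_, ?_, ?_⟩
  · rintro ⟨T, hfill, ⟨hcolT, hrowT⟩, hcont⟩
    exact ⟨bk s k T, bk_filling hfill,
      ⟨bk_colCond hsh hcolT hrowT, bk_rowCond hsh hcolT hrowT⟩,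
      by rw [bk_content hsh hcolT hrowT, hcont, hswapswap]⟩
  · rintro ⟨T, hfill, ⟨hcolT, hrowT⟩, hcont⟩
    exact ⟨bk s k T, bk_filling hfill,
      ⟨bk_colCond hsh hcolT hrowT, bk_rowCond hsh hcolT hrowT⟩,
      by rw [bk_content hsh hcolT hrowT, hcont]⟩
  · rintro ⟨T, hfill, ⟨hcolT, hrowT⟩, hcont⟩
    exact Subtype.ext (bk_bk hsh hcolT hrowT)
  · rintro ⟨T, hfill, ⟨hcolT, hrowT⟩, hcont⟩
    exact Subtype.ext (bk_bk hsh hcolT hrowT)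

/-- Skew diagrams of pairs of partitions satisfy the shape hypotheses. -/
lemma bkshape_cells {α lam : List ℕ} (hα : α.Pairwise (· ≥ ·))
    (hlam : lam.Pairwise (· ≥ ·)) : BKShape (cells α lam) := by
  constructor
  · intro r j j'' j' h1 h2 hle1 hle2
    obtain ⟨a1, a2, a3⟩ := mem_cells'.1 h1
    obtain ⟨b1, b2, b3⟩ := mem_cells'.1 h2
    exact mem_cells'.2 ⟨a1, by omega, by omega⟩
  · intro r'' r j hlt h1 h2
    obtain ⟨a1, a2, a3⟩ := mem_cells'.1 h1
    obtain ⟨b1, b2, b3⟩ := mem_cells'.1 h2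
    have := getD_antitone hα (le_of_lt hlt)
    exact mem_cells'.2 ⟨a1, by omega, by omega⟩
  · intro r r'' j hlt h2 hj h1
    obtain ⟨a1, a2, a3⟩ := mem_cells'.1 h2
    obtain ⟨b1, b2, b3⟩ := mem_cells'.1 h1
    have := getD_antitone hlam (le_of_lt hlt)
    exact mem_cells'.2 ⟨a1, by omega, by omega⟩
  · intro r r'' r' j hle1 hle2 h1 h2
    obtain ⟨a1, a2, a3⟩ := mem_cells'.1 h1
    obtain ⟨b1, b2, b3⟩ := mem_cells'.1 h2
    have hl := getD_antitone hlam hle1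
    have ha := getD_antitone hα hle2
    exact mem_cells'.2 ⟨by omega, by omega, by omega⟩
/-- **Theorem** (symmetry of row-strict extended Schur functions): for a composition
`α` and a partition `λ ⊆ α`, `ℛε_{α/λ}` is symmetric iff `α` is a partition. -/
theorem rowStrictExtendedSchur_symmetric_iff (α lam : List ℕ)
    (hα : IsComposition α) (hlam : IsPartitionL lam) (hsub : Subdiagram lam α)
    (hconn : ConnectedDiagram α lam) (hrows : RowsNonempty α lam) :
    IsSymmFn (rowStrictExtendedSchurF α lam) ↔ IsPartitionL α := by
  constructor
  · exact fun h => forward_dir α lam hα hlam hrows h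
  · intro hpart
    apply isSymmFn_of_swaps
    intro p d
    rw [rowStrictExtendedSchurF, coeff_genFun, coeff_genFun]
    exact_mod_cast congrArg (Nat.cast (R := ℚ))
      (bk_card_eq (bkshape_cells hpart.2 hlam.2) p d)

end SQS
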